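/- arXiv:2603.27617 — 2 statements merged into one kernel-verified Lean document; each statement's English description precedes it below -/
import Mathlib

section
/- Let f : G → G' be a surjective group homomorphism whose kernel is contained in the hypercenter Z_∞(G). Then f(Z_∞(G)) = Z_∞(G'). -/
/-- The hypercenter of a group: the intersection of all normal subgroups `N`
such that `G ⧸ N` has trivial center. (Quotients are taken via `normalCore`,
which agrees with `N` for normal `N`.) -/
def hypercenter (G : Type*) [Group G] : Subgroup G :=
  sInf {N : Subgroup G | N.Normal ∧ Subgroup.center (G ⧸ N.normalCore) = ⊥}

/-- Element-wise predicate equivalent to the quotient having trivial center. -/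
def hypAux {G : Type*} [Group G] (N : Subgroup G) : Prop :=
  ∀ g : G, (∀ h : G, (h * g)⁻¹ * (g * h) ∈ N) → g ∈ N

lemma center_quot_eq_bot_iff {G : Type*} [Group G] (N : Subgroup G) [N.Normal] :
    Subgroup.center (G ⧸ N) = ⊥ ↔ hypAux N := by
  constructor
  · intro hc g hg
    have hmem : (g : G ⧸ N) ∈ Subgroup.center (G ⧸ N) := by
      rw [Subgroup.mem_center_iff]
      intro x
      induction x using QuotientGroup.induction_on with
      | _ h =>
        show ((h * g : G) : G ⧸ N) = ((g * h : G) : G ⧸ N)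
        rw [QuotientGroup.eq]
        exact hg h
    rw [hc, Subgroup.mem_bot] at hmem
    exact (QuotientGroup.eq_one_iff g).mp hmem
  · intro H
    rw [eq_bot_iff]
    intro x hx
    induction x using QuotientGroup.induction_on with
    | _ g =>
      rw [Subgroup.mem_bot, QuotientGroup.eq_one_iff]
      refine H g fun h => ?_
      have := (Subgroup.mem_center_iff.mp hx) ((h : G ⧸ N))
      rw [← QuotientGroup.mk_mul, ← QuotientGroup.mk_mul, QuotientGroup.eq] at this
      exact this

lemma hypAux_comap_iff {G G' : Type*} [Group G] [Group G'] (f : G →* G')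
    (hf : Function.Surjective f) (N' : Subgroup G') :
    hypAux (N'.comap f) ↔ hypAux N' := by
  constructor
  · intro H g' hg'
    obtain ⟨g, rfl⟩ := hf g'
    have hg : g ∈ N'.comap f := by
      refine H g fun h => ?_
      show f ((h * g)⁻¹ * (g * h)) ∈ N'
      rw [map_mul, map_inv, map_mul, map_mul]
      exact hg' (f h)
    exact hg
  · intro H g hg
    show f g ∈ N'
    refine H (f g) fun h' => ?_
    obtain ⟨h, rfl⟩ := hf h'
    have := hg h
    simpa [Subgroup.mem_comap, map_mul, map_inv] using this

lemma mem_hyp_set_iff {G : Type*} [Group G] (N : Subgroup G) (hN : N.Normal) :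
    N ∈ {N : Subgroup G | N.Normal ∧ Subgroup.center (G ⧸ N.normalCore) = ⊥} ↔ hypAux N := by
  haveI := hN
  have h1 : hypAux N.normalCore ↔ hypAux N := by rw [N.normalCore_eq_self]
  rw [Set.mem_setOf_eq, center_quot_eq_bot_iff N.normalCore, h1]
  exact ⟨fun h => h.2, fun h => ⟨hN, h⟩⟩

theorem stmt11 {G G' : Type*} [Group G] [Group G'] (f : G →* G')
    (hf : Function.Surjective f) (hker : f.ker ≤ hypercenter G) :
    Subgroup.map f (hypercenter G) = hypercenter G' := by
  apply le_antisymm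
  · -- map f (hyp G) ≤ hyp G'
    rw [Subgroup.map_le_iff_le_comap]
    intro x hx
    rw [Subgroup.mem_comap]
    refine Subgroup.mem_sInf.mpr fun N' hN' => ?_
    have hc1 : (N'.comap f) ∈ {N : Subgroup G | N.Normal ∧
        Subgroup.center (G ⧸ N.normalCore) = ⊥} := by
      rw [mem_hyp_set_iff _ (hN'.1.comap f), hypAux_comap_iff f hf]
      exact (mem_hyp_set_iff N' hN'.1).mp hN'
    exact (sInf_le hc1 : hypercenter G ≤ N'.comap f) hx
  · -- hyp G' ≤ map f (hyp G)
    have key : (hypercenter G').comap f ≤ hypercenter G := by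
      apply le_sInf
      intro N hN
      have hkN : f.ker ≤ N := le_trans hker (sInf_le hN)
      have hmapN : (N.map f) ∈ {N : Subgroup G' | N.Normal ∧
          Subgroup.center (G' ⧸ N.normalCore) = ⊥} := by
        rw [mem_hyp_set_iff _ (hN.1.map f hf)]
        rw [← hypAux_comap_iff f hf, Subgroup.comap_map_eq_self hkN]
        exact (mem_hyp_set_iff N hN.1).mp hN
      have h1 : hypercenter G' ≤ N.map f := sInf_le hmapN
      calc (hypercenter G').comap f ≤ (N.map f).comap f := Subgroup.comap_mono h1
        _ = N := Subgroup.comap_map_eq_self hkN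
    calc hypercenter G' = ((hypercenter G').comap f).map f :=
          (Subgroup.map_comap_eq_self_of_surjective hf _).symm
      _ ≤ (hypercenter G).map f := Subgroup.map_mono key
end

section
/- Let G be a group of upper triangular invertible d×d matrices over a field such that G is nilpotent. Then the nilpotency class of G is at most d(d-1)/2 + 1. -/
/-!
Let `U m = superdiagSubgroup m` be the group of invertible `g` such that `g - 1` vanishes below
the `m`-th superdiagonal (so `U 0` is the upper triangular group). Commutators of upper
triangular matrices have unit diagonal, so `⁅U 0, U 0⁆ ≤ U 1`. For `m ≥ 1`, `u ∈ U m` and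
`g ∈ U 0`, the commutator `⁅u, g⁆` lies in `U m` and its entries on the `m`-th superdiagonal are
those of `u` multiplied by scalars `c = (g j j - g i i) * g⁻¹ j j`; iterating,
`(fun w => ⁅w, g⁆)^[n] u` has entries `x * c ^ n` there. In a nilpotent group these iterated
commutators reach `1`, so `x * c = 0` over a domain, i.e. `⁅u, g⁆ ∈ U (m + 1)`. Hence the `n`-th
term of the lower central series of `G` lies in `U n`, which is trivial for `n ≥ d`: the
nilpotency class is at most `d ≤ d (d - 1) / 2 + 1`.
-/

open Matrix
open scoped commutatorElement

theorem Units.val_commutatorElement_sub_one {A : Type*} [Ring A] (u g : Aˣ) :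
    ((⁅u, g⁆ : Aˣ) : A) - 1 = ((u - 1) * g - g * (u - 1)) * (↑u⁻¹ * ↑g⁻¹) := by
  have hu := u.mul_inv
  have hg := g.mul_inv
  rw [commutatorElement_def, Units.val_mul, Units.val_mul, Units.val_mul]
  calc (u * g * ↑u⁻¹ * ↑g⁻¹ : A) - 1
      = u * g * ↑u⁻¹ * ↑g⁻¹ - g * (u * ↑u⁻¹) * ↑g⁻¹ := by rw [hu, mul_one, hg]
    _ = ((u - 1) * g - g * (u - 1)) * (↑u⁻¹ * ↑g⁻¹) := by noncomm_ring

namespace Subgroup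

variable {G : Type*} [Group G] {S : Subgroup G}

theorem iterate_commutatorElement_mem_lowerCentralSeries {u g : G} (hu : u ∈ S) (hg : g ∈ S)
    (n : ℕ) : (fun w => ⁅w, g⁆)^[n] u ∈ S.lowerCentralSeries n := by
  induction n with
  | zero => exact hu
  | succ n ih =>
    rw [Function.iterate_succ_apply']
    exact commutator_mem_commutator ih hg

theorem exists_iterate_commutatorElement_eq_one [Group.IsNilpotent S] {u g : G} (hu : u ∈ S)
    (hg : g ∈ S) : ∃ n, (fun w => ⁅w, g⁆)^[n] u = 1 := by
  obtain ⟨n, hn⟩ := (isNilpotent_iff_lowerCentralSeries S).1 ‹_›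
  exact ⟨n, by simpa [hn] using iterate_commutatorElement_mem_lowerCentralSeries hu hg n⟩

theorem nilpotencyClass_le_of_lowerCentralSeries_eq_bot {n : ℕ}
    (h : S.lowerCentralSeries n = ⊥) : Group.nilpotencyClass S ≤ n := by
  have := isNilpotent_of_lowerCentralSeries_eq_bot h
  rw [← lowerCentralSeries_eq_bot_iff_nilpotencyClass_le, ← map_eq_bot_iff_of_injective _
    S.subtype_injective, top_subtype_lowerCentralSeries, h]

end Subgroup

namespace Matrix

variable {R : Type*} {d : ℕ}

def VanishesBelowSuperdiag [Zero R] (m : ℕ) (M : Matrix (Fin d) (Fin d) R) : Prop :=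
  ∀ i j : Fin d, (j : ℕ) < i + m → M i j = 0

namespace VanishesBelowSuperdiag

section Zero

variable [Zero R] {m n : ℕ} {M : Matrix (Fin d) (Fin d) R}

theorem mono (h : n ≤ m) (hM : VanishesBelowSuperdiag m M) : VanishesBelowSuperdiag n M :=
  fun i j hij => hM i j (by omega)

theorem zero (m : ℕ) : VanishesBelowSuperdiag m (0 : Matrix (Fin d) (Fin d) R) :=
  fun _ _ _ => rfl

theorem eq_zero (hd : d ≤ m) (hM : VanishesBelowSuperdiag m M) : M = 0 := by
  ext i j
  exact hM i j (by omega)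

theorem zero_iff_isUpperTriangular :
    VanishesBelowSuperdiag 0 M ↔ M.IsUpperTriangular :=
  ⟨fun hM _ _ hij => hM _ _ hij, fun hM _ _ hij => hM hij⟩

end Zero

theorem one [Zero R] [One R] : VanishesBelowSuperdiag 0 (1 : Matrix (Fin d) (Fin d) R) :=
  fun _ _ hij => one_apply_ne (Fin.ne_of_gt hij)

section Arith

variable [Ring R] {m n : ℕ} {M N : Matrix (Fin d) (Fin d) R}

theorem add (hM : VanishesBelowSuperdiag m M) (hN : VanishesBelowSuperdiag m N) :
    VanishesBelowSuperdiag m (M + N) := fun i j hij => by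
  rw [add_apply, hM i j hij, hN i j hij, add_zero]

theorem neg (hM : VanishesBelowSuperdiag m M) : VanishesBelowSuperdiag m (-M) :=
  fun i j hij => by rw [neg_apply, hM i j hij, neg_zero]

theorem sub (hM : VanishesBelowSuperdiag m M) (hN : VanishesBelowSuperdiag m N) :
    VanishesBelowSuperdiag m (M - N) :=
  sub_eq_add_neg M N ▸ hM.add hN.neg

theorem mul (hM : VanishesBelowSuperdiag m M) (hN : VanishesBelowSuperdiag n N) :
    VanishesBelowSuperdiag (m + n) (M * N) := fun i j hij => by
  rw [mul_apply]
  refine Finset.sum_eq_zero fun l _ => ?_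
  by_cases hl : (l : ℕ) < i + m
  · rw [hM i l hl, zero_mul]
  · rw [hN l j (by omega), mul_zero]

theorem mul_apply_of_eq_add_right (hM : VanishesBelowSuperdiag m M)
    (hN : VanishesBelowSuperdiag 0 N) {i j : Fin d} (hij : (j : ℕ) = i + m) :
    (M * N) i j = M i j * N j j := by
  rw [mul_apply]
  refine Finset.sum_eq_single_of_mem j (Finset.mem_univ j) fun l _ hl => ?_
  rcases lt_or_gt_of_ne (Fin.val_ne_of_ne hl) with h | h
  · rw [hM i l (by omega), zero_mul]
  · rw [hN l j (by omega), mul_zero]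

theorem mul_apply_of_eq_add_left (hM : VanishesBelowSuperdiag 0 M)
    (hN : VanishesBelowSuperdiag m N) {i j : Fin d} (hij : (j : ℕ) = i + m) :
    (M * N) i j = M i i * N i j := by
  rw [mul_apply]
  refine Finset.sum_eq_single_of_mem i (Finset.mem_univ i) fun l _ hl => ?_
  rcases lt_or_gt_of_ne (Fin.val_ne_of_ne hl) with h | h
  · rw [hM i l (by omega), zero_mul]
  · rw [hN l j (by omega), mul_zero]

theorem mul_sub_mul (hM : VanishesBelowSuperdiag m M) (hN : VanishesBelowSuperdiag 0 N) :
    VanishesBelowSuperdiag m (M * N - N * M) :=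
  (hM.mul hN).sub ((hN.mul hM).mono (by omega))

theorem of_sub_one (hM : VanishesBelowSuperdiag m (M - 1)) : VanishesBelowSuperdiag 0 M := by
  simpa using (hM.mono (Nat.zero_le m)).add one

end Arith

end VanishesBelowSuperdiag

namespace GeneralLinearGroup

variable [CommRing R] {m : ℕ}

theorem vanishesBelowSuperdiag_zero_inv {g : GL (Fin d) R}
    (hg : VanishesBelowSuperdiag 0 (g : Matrix (Fin d) (Fin d) R)) :
    VanishesBelowSuperdiag 0 (↑g⁻¹ : Matrix (Fin d) (Fin d) R) := by
  have := g.invertible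
  rw [coe_units_inv, VanishesBelowSuperdiag.zero_iff_isUpperTriangular]
  exact blockTriangular_inv_of_blockTriangular
    (VanishesBelowSuperdiag.zero_iff_isUpperTriangular.1 hg)

def superdiagSubgroup (m : ℕ) : Subgroup (GL (Fin d) R) where
  carrier := {g | VanishesBelowSuperdiag m ((g : Matrix (Fin d) (Fin d) R) - 1)}
  one_mem' := by simpa using VanishesBelowSuperdiag.zero m
  mul_mem' {g h} hg hh := by
    have hexp : ((g * h : GL (Fin d) R) : Matrix (Fin d) (Fin d) R) - 1
        = (g - 1) * (h - 1) + ((g - 1) + (h - 1)) := by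
      rw [Units.val_mul]; noncomm_ring
    change VanishesBelowSuperdiag m _
    rw [hexp]
    exact ((hg.mul hh).mono (by omega)).add (hg.add hh)
  inv_mem' {g} hg := by
    have hexp : (↑g⁻¹ : Matrix (Fin d) (Fin d) R) - 1
        = -((g - 1) * (g⁻¹ : GL (Fin d) R)) := by
      rw [sub_mul, Units.mul_inv, one_mul, neg_sub]
    change VanishesBelowSuperdiag m _
    rw [hexp]
    exact (hg.mul (vanishesBelowSuperdiag_zero_inv hg.of_sub_one)).neg

theorem mem_superdiagSubgroup {g : GL (Fin d) R} :
    g ∈ superdiagSubgroup m ↔ VanishesBelowSuperdiag m ((g : Matrix (Fin d) (Fin d) R) - 1) :=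
  Iff.rfl

theorem vanishesBelowSuperdiag_zero_of_mem {g : GL (Fin d) R} (hg : g ∈ superdiagSubgroup m) :
    VanishesBelowSuperdiag 0 (g : Matrix (Fin d) (Fin d) R) :=
  VanishesBelowSuperdiag.of_sub_one hg

theorem mem_superdiagSubgroup_zero_iff {g : GL (Fin d) R} :
    g ∈ superdiagSubgroup 0 ↔ (g : Matrix (Fin d) (Fin d) R).IsUpperTriangular := by
  rw [← VanishesBelowSuperdiag.zero_iff_isUpperTriangular]
  refine ⟨vanishesBelowSuperdiag_zero_of_mem, fun hg => hg.sub VanishesBelowSuperdiag.one⟩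

theorem superdiagSubgroup_eq_bot (hd : d ≤ m) :
    superdiagSubgroup m = (⊥ : Subgroup (GL (Fin d) R)) := by
  refine (Subgroup.eq_bot_iff_forall _).2 fun g hg => Units.ext ?_
  exact sub_eq_zero.1 (hg.eq_zero hd)

theorem apply_self_eq_one_of_mem (hm : 1 ≤ m) {g : GL (Fin d) R} (hg : g ∈ superdiagSubgroup m)
    (i : Fin d) : (g : Matrix (Fin d) (Fin d) R) i i = 1 := by
  have := hg i i (by omega)
  rwa [sub_apply, one_apply_eq, sub_eq_zero] at this

theorem mem_superdiagSubgroup_succ {g : GL (Fin d) R} (hg : g ∈ superdiagSubgroup m)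
    (h : ∀ i j : Fin d, (j : ℕ) = i + m → ((g : Matrix (Fin d) (Fin d) R) - 1) i j = 0) :
    g ∈ superdiagSubgroup (m + 1) := fun i j hij => by
  rcases Nat.lt_or_ge j (i + m) with hlt | hge
  · exact hg i j hlt
  · exact h i j (by omega)

theorem commutatorElement_mem_superdiagSubgroup {u g : GL (Fin d) R}
    (hu : u ∈ superdiagSubgroup m) (hg : g ∈ superdiagSubgroup 0) :
    ⁅u, g⁆ ∈ superdiagSubgroup m := by
  have hg0 := vanishesBelowSuperdiag_zero_of_mem hg
  rw [mem_superdiagSubgroup, Units.val_commutatorElement_sub_one]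
  exact (hu.mul_sub_mul hg0).mul
    ((vanishesBelowSuperdiag_zero_of_mem (inv_mem hu)).mul (vanishesBelowSuperdiag_zero_inv hg0))

theorem commutatorElement_sub_one_apply {u g : GL (Fin d) R}
    (hu : u ∈ superdiagSubgroup m) (hg : g ∈ superdiagSubgroup 0) {i j : Fin d}
    (hij : (j : ℕ) = i + m) :
    ((⁅u, g⁆ : GL (Fin d) R) - 1 : Matrix (Fin d) (Fin d) R) i j =
      ((u : Matrix (Fin d) (Fin d) R) - 1) i j * (g j j - g i i) *
        ((↑u⁻¹ : Matrix (Fin d) (Fin d) R) j j *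
          (↑g⁻¹ : Matrix (Fin d) (Fin d) R) j j) := by
  have hg0 := vanishesBelowSuperdiag_zero_of_mem hg
  have hu0 := vanishesBelowSuperdiag_zero_of_mem (inv_mem hu)
  have hginv0 := vanishesBelowSuperdiag_zero_inv hg0
  rw [Units.val_commutatorElement_sub_one,
    (hu.mul_sub_mul hg0).mul_apply_of_eq_add_right (hu0.mul hginv0) hij,
    sub_apply, hu.mul_apply_of_eq_add_right hg0 hij, hg0.mul_apply_of_eq_add_left hu hij,
    hu0.mul_apply_of_eq_add_right (m := 0) hginv0 rfl]
  ring

theorem commutatorElement_mem_superdiagSubgroup_one {u g : GL (Fin d) R}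
    (hu : u ∈ superdiagSubgroup 0) (hg : g ∈ superdiagSubgroup 0) :
    ⁅u, g⁆ ∈ superdiagSubgroup 1 :=
  mem_superdiagSubgroup_succ (commutatorElement_mem_superdiagSubgroup hu hg) fun i j hij => by
    obtain rfl : j = i := Fin.ext hij
    rw [commutatorElement_sub_one_apply hu hg hij, sub_self, mul_zero, zero_mul]

theorem iterate_commutatorElement_sub_one_apply (hm : 1 ≤ m) {u g : GL (Fin d) R}
    (hu : u ∈ superdiagSubgroup m) (hg : g ∈ superdiagSubgroup 0) {i j : Fin d}
    (hij : (j : ℕ) = i + m) (r : ℕ) :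
    (fun w => ⁅w, g⁆)^[r] u ∈ superdiagSubgroup m ∧
      (((fun w => ⁅w, g⁆)^[r] u : GL (Fin d) R) - 1 : Matrix (Fin d) (Fin d) R) i j =
        ((u : Matrix (Fin d) (Fin d) R) - 1) i j *
          ((g j j - g i i) * (↑g⁻¹ : Matrix (Fin d) (Fin d) R) j j) ^ r := by
  induction r with
  | zero => exact ⟨hu, by simp⟩
  | succ r ih =>
    obtain ⟨hw, hwij⟩ := ih
    rw [Function.iterate_succ_apply']
    refine ⟨commutatorElement_mem_superdiagSubgroup hw hg, ?_⟩
    rw [commutatorElement_sub_one_apply hw hg hij, hwij,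
      apply_self_eq_one_of_mem hm (inv_mem hw), pow_succ]
    ring

variable [NoZeroDivisors R] {S : Subgroup (GL (Fin d) R)} [Group.IsNilpotent S]

theorem commutatorElement_mem_superdiagSubgroup_succ (hS : S ≤ superdiagSubgroup 0)
    {u g : GL (Fin d) R} (huS : u ∈ S) (hgS : g ∈ S) (hu : u ∈ superdiagSubgroup m) :
    ⁅u, g⁆ ∈ superdiagSubgroup (m + 1) := by
  rcases Nat.eq_zero_or_pos m with rfl | hm
  · exact commutatorElement_mem_superdiagSubgroup_one hu (hS hgS)
  obtain ⟨n, hn⟩ := S.exists_iterate_commutatorElement_eq_one huS hgS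
  refine mem_superdiagSubgroup_succ (commutatorElement_mem_superdiagSubgroup hu (hS hgS))
    fun i j hij => ?_
  have hiter := fun r => (iterate_commutatorElement_sub_one_apply hm hu (hS hgS) hij r).2
  have hvanish := hiter n
  rw [hn, Units.val_one, sub_self, zero_apply, eq_comm, mul_eq_zero] at hvanish
  have hstep := hiter 1
  rw [Function.iterate_one, pow_one] at hstep
  rw [hstep]
  rcases hvanish with h | h
  · rw [h, zero_mul]
  · rw [eq_zero_of_pow_eq_zero h, mul_zero]

theorem lowerCentralSeries_le_superdiagSubgroup (hS : S ≤ superdiagSubgroup 0) (n : ℕ) :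
    S.lowerCentralSeries n ≤ superdiagSubgroup n := by
  induction n with
  | zero => exact hS
  | succ n ih =>
    rw [Subgroup.lowerCentralSeries_succ, Subgroup.commutator_le]
    exact fun u hu g hg => commutatorElement_mem_superdiagSubgroup_succ hS
      (S.lowerCentralSeries_le_self n hu) hg (ih hu)

theorem nilpotencyClass_le_of_le_superdiagSubgroup_zero (hS : S ≤ superdiagSubgroup 0) :
    Group.nilpotencyClass S ≤ d := by
  refine Subgroup.nilpotencyClass_le_of_lowerCentralSeries_eq_bot (le_bot_iff.1 ?_)
  exact superdiagSubgroup_eq_bot (R := R) le_rfl ▸ lowerCentralSeries_le_superdiagSubgroup hS d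

end GeneralLinearGroup

end Matrix

theorem stmt18 {k : Type*} [Field k] (d : ℕ) (G : Subgroup (GL (Fin d) k))
    (htri : ∀ g : GL (Fin d) k, g ∈ G →
      ((g : Matrix (Fin d) (Fin d) k)).BlockTriangular id)
    [hnil : Group.IsNilpotent G] :
    Group.nilpotencyClass G ≤ d * (d - 1) / 2 + 1 := by
  have hG : G ≤ GeneralLinearGroup.superdiagSubgroup 0 := fun g hg =>
    GeneralLinearGroup.mem_superdiagSubgroup_zero_iff.2 (htri g hg)
  refine (GeneralLinearGroup.nilpotencyClass_le_of_le_superdiagSubgroup_zero hG).trans ?_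
  obtain _ | _ | n := d
  · exact Nat.zero_le _
  · exact le_rfl
  rw [Nat.add_sub_cancel, Nat.add_le_add_iff_right, Nat.le_div_iff_mul_le two_pos]
  nlinarith
end
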